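/- Let 1 < p ≤ 2 and let u : ℝ^n × (0,∞) → ℂ be measurable with 𝒜₂(t·u) ∈ L^p(ℝ^n), where (t·u)(y,t) = t u(y,t) and 𝒜₂ is the Lusin area integral of aperture 1. Suppose also that for every x ∈ ℝ^n, every τ > 0 and a suitable constant c ≥ 1, ∫_{|y−x|<cτ/2} ∫_{cτ}^{2cτ} |u(y,t)|² dt dy ≤ C₀ τ^{n−1} (𝒜₂(t·u)(x))². Then for every σ > 0, ∫_{ℝ^n} ∫_σ^∞ |u(y,t)|² dt dy ≤ C σ^{n − 1 − 2n/p} ‖𝒜₂(t·u)‖_{L^p(ℝ^n)}², with C depending only on n, p, c, C₀. -/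

import Mathlib

/-!
Cover the region `t > σ` by the dyadic layers `2ʲσ ≤ t ≤ 2ʲ⁺¹σ`, and split each layer into boxes
`Q × [ρ, 2ρ]`, `ρ = 2ʲσ`, over a grid of cubes `Q` of side comparable to `ρ`, small enough that
`Q` lies in the ball of radius `ρ/2` around each of its points. The local hypothesis bounds the
box integral by `ρ^(n-1) 𝒜₂(t·u)(x)²` for every `x ∈ Q`, hence by `ρ^(n-1)` times the `2/p`-th
power of the average of `𝒜₂(t·u)^p` over `Q`. As `2/p ≥ 1`, `∑_Q (∫_Q g^p)^(2/p) ≤ (∫ g^p)^(2/p)`,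
so layer `j` contributes `≲ ρ^(n-1-2n/p) ‖𝒜₂(t·u)‖ₚ²`, and `n - 1 - 2n/p ≤ -1` makes the sum
over `j` geometric.
-/

open MeasureTheory Set ENNReal

/-- The Lusin area integral `𝒜₂(t·u)` of aperture 1. -/
noncomputable def lusinTA2 (n : ℕ) (u : EuclideanSpace ℝ (Fin n) × ℝ → ℂ)
    (x : EuclideanSpace ℝ (Fin n)) : ℝ≥0∞ :=
  (∫⁻ p in {p : EuclideanSpace ℝ (Fin n) × ℝ | dist x p.1 < p.2 ∧ 0 < p.2},
      ENNReal.ofReal (p.2 ^ 2 * ‖u p‖ ^ 2) / ENNReal.ofReal (p.2 ^ (n + 1))) ^ (1 / 2 : ℝ)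

theorem ENNReal.tsum_rpow_le_rpow_tsum {ι : Type*} (a : ι → ℝ≥0∞) {r : ℝ} (hr : 1 ≤ r) :
    ∑' i, a i ^ r ≤ (∑' i, a i) ^ r := by
  have hsplit (x : ℝ≥0∞) : x ^ (r - 1) * x = x ^ r := by
    conv_rhs => rw [← sub_add_cancel r 1,
      ENNReal.rpow_add_of_nonneg _ _ (sub_nonneg.2 hr) zero_le_one, ENNReal.rpow_one]
  calc ∑' i, a i ^ r = ∑' i, a i ^ (r - 1) * a i := by simp_rw [hsplit]
    _ ≤ ∑' i, (∑' j, a j) ^ (r - 1) * a i := by gcongr with i; exact ENNReal.le_tsum i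
    _ = (∑' i, a i) ^ r := by rw [ENNReal.tsum_mul_left, hsplit]

theorem tsum_ofReal_two_pow_mul_rpow_le {σ e : ℝ} (hσ : 0 < σ) (he : e ≤ -1) :
    ∑' j : ℕ, ENNReal.ofReal ((2 ^ j * σ) ^ e) ≤ 2 * ENNReal.ofReal (σ ^ e) := by
  have hterm (j : ℕ) : ENNReal.ofReal ((2 ^ j * σ) ^ e) ≤ 2⁻¹ ^ j * ENNReal.ofReal (σ ^ e) := by
    have h2 : ((2 : ℝ) ^ j) ^ e ≤ 2⁻¹ ^ j := by
      rw [← Real.rpow_natCast, ← Real.rpow_mul zero_le_two, inv_pow, ← Real.rpow_natCast,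
        ← Real.rpow_neg zero_le_two]
      exact Real.rpow_le_rpow_of_exponent_le one_le_two (by nlinarith [j.cast_nonneg (α := ℝ)])
    rw [Real.mul_rpow (by positivity) hσ.le, ENNReal.ofReal_mul (by positivity)]
    gcongr
    calc ENNReal.ofReal (((2 : ℝ) ^ j) ^ e) ≤ ENNReal.ofReal (2⁻¹ ^ j) :=
          ENNReal.ofReal_le_ofReal h2
      _ = 2⁻¹ ^ j := by
        rw [ENNReal.ofReal_pow (by norm_num), ENNReal.ofReal_inv_of_pos two_pos,
          ENNReal.ofReal_ofNat]
  calc ∑' j : ℕ, ENNReal.ofReal ((2 ^ j * σ) ^ e) ≤ ∑' j : ℕ, 2⁻¹ ^ j * ENNReal.ofReal (σ ^ e) :=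
        ENNReal.tsum_le_tsum hterm
    _ = 2 * ENNReal.ofReal (σ ^ e) := by
        rw [ENNReal.tsum_mul_right, ENNReal.tsum_geometric, ENNReal.one_sub_inv_two, inv_inv]

theorem Ioi_subset_iUnion_Icc_two_pow_mul {σ : ℝ} (hσ : 0 < σ) :
    Ioi σ ⊆ ⋃ j : ℕ, Icc (2 ^ j * σ) (2 ^ (j + 1) * σ) := by
  intro t (ht : σ < t)
  obtain ⟨j, hj, hj'⟩ := exists_nat_pow_near ((one_le_div₀ hσ).2 ht.le) (one_lt_two (α := ℝ))
  rw [le_div_iff₀ hσ] at hj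
  rw [div_lt_iff₀ hσ] at hj'
  exact mem_iUnion.2 ⟨j, hj, hj'.le⟩

theorem lintegral_setLIntegral_Ioi_le_of_dyadic {E : Type*} [MeasurableSpace E] {μ : Measure E}
    {f : E × ℝ → ℝ≥0∞} (hf : Measurable f) {e : ℝ} (he : e ≤ -1) {M : ℝ≥0∞}
    (h : ∀ ρ, 0 < ρ → ∫⁻ y, (∫⁻ t in Icc ρ (2 * ρ), f (y, t)) ∂μ ≤ M * ENNReal.ofReal (ρ ^ e))
    {σ : ℝ} (hσ : 0 < σ) :
    ∫⁻ y, (∫⁻ t in Ioi σ, f (y, t)) ∂μ ≤ 2 * M * ENNReal.ofReal (σ ^ e) :=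
  calc ∫⁻ y, (∫⁻ t in Ioi σ, f (y, t)) ∂μ
      ≤ ∫⁻ y, ∑' j : ℕ, (∫⁻ t in Icc (2 ^ j * σ) (2 ^ (j + 1) * σ), f (y, t)) ∂μ :=
        lintegral_mono fun _ =>
          (lintegral_mono_set (Ioi_subset_iUnion_Icc_two_pow_mul hσ)).trans
            (lintegral_iUnion_le _ _)
    _ = ∑' j : ℕ, ∫⁻ y, (∫⁻ t in Icc (2 ^ j * σ) (2 ^ (j + 1) * σ), f (y, t)) ∂μ :=
        lintegral_tsum fun _ => hf.lintegral_prod_right'.aemeasurable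
    _ ≤ ∑' j : ℕ, M * ENNReal.ofReal ((2 ^ j * σ) ^ e) := by
        gcongr with j
        simpa only [pow_succ', mul_assoc] using h _ (by positivity)
    _ ≤ M * (2 * ENNReal.ofReal (σ ^ e)) := by
        rw [ENNReal.tsum_mul_left]
        gcongr
        exact tsum_ofReal_two_pow_mul_rpow_le hσ he
    _ = 2 * M * ENNReal.ofReal (σ ^ e) := by ring

section GridCube

variable {ι : Type*}

def gridCube (s : ℝ) (k : ι → ℤ) : Set (EuclideanSpace ℝ ι) :=
  WithLp.ofLp ⁻¹' univ.pi fun i => Ico (k i * s) (k i * s + s)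

theorem mem_gridCube {s : ℝ} {k : ι → ℤ} {x : EuclideanSpace ℝ ι} :
    x ∈ gridCube s k ↔ ∀ i, x i ∈ Ico (k i * s) (k i * s + s) := by
  simp [gridCube]

theorem mem_gridCube_iff_floor {s : ℝ} (hs : 0 < s) {k : ι → ℤ} {x : EuclideanSpace ℝ ι} :
    x ∈ gridCube s k ↔ ∀ i, ⌊x i / s⌋ = k i := by
  simp only [mem_gridCube, Int.floor_eq_iff, mem_Ico, le_div_iff₀ hs, div_lt_iff₀ hs, add_mul,
    one_mul]

theorem measurableSet_gridCube [Fintype ι] (s : ℝ) (k : ι → ℤ) : MeasurableSet (gridCube s k) :=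
  WithLp.measurable_ofLp _ _ (MeasurableSet.univ_pi fun _ => measurableSet_Ico)

theorem pairwise_disjoint_gridCube {s : ℝ} (hs : 0 < s) :
    Pairwise (Function.onFun Disjoint (gridCube (ι := ι) s)) := by
  intro k k' hkk'
  refine disjoint_left.2 fun x hx hx' => hkk' (funext fun i => ?_)
  rw [← (mem_gridCube_iff_floor hs).1 hx i, (mem_gridCube_iff_floor hs).1 hx' i]

theorem iUnion_gridCube {s : ℝ} (hs : 0 < s) : ⋃ k, gridCube (ι := ι) s k = univ :=
  eq_univ_of_forall fun x =>
    mem_iUnion.2 ⟨fun i => ⌊x i / s⌋, (mem_gridCube_iff_floor hs).2 fun _ => rfl⟩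

theorem volume_gridCube [Fintype ι] (s : ℝ) (k : ι → ℤ) :
    volume (gridCube s k) = ENNReal.ofReal s ^ Fintype.card ι := by
  rw [gridCube, (PiLp.volume_preserving_ofLp ι).measure_preimage
    (MeasurableSet.univ_pi fun _ => measurableSet_Ico).nullMeasurableSet, volume_pi_pi]
  simp [Real.volume_Ico]

theorem dist_le_of_mem_gridCube [Fintype ι] {s : ℝ} (hs : 0 ≤ s) {k : ι → ℤ}
    {x y : EuclideanSpace ℝ ι} (hx : x ∈ gridCube s k) (hy : y ∈ gridCube s k) :
    dist x y ≤ √(Fintype.card ι) * s := by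
  have hcoord (i : ι) : dist (x i) (y i) ^ 2 ≤ s ^ 2 := by
    have hxi := mem_gridCube.1 hx i
    have hyi := mem_gridCube.1 hy i
    rw [mem_Ico] at hxi hyi
    rw [Real.dist_eq, sq_abs]
    nlinarith
  calc dist x y ≤ √(∑ _i : ι, s ^ 2) := by
        rw [EuclideanSpace.dist_eq]
        exact Real.sqrt_le_sqrt (Finset.sum_le_sum fun i _ => hcoord i)
    _ = √(Fintype.card ι) * s := by
        rw [Finset.sum_const, Finset.card_univ, nsmul_eq_mul, Real.sqrt_mul (Nat.cast_nonneg _),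
          Real.sqrt_sq hs]

end GridCube

section Partition

variable {X : Type*} [MeasurableSpace X] {μ : Measure X} {B : ℝ≥0∞} {g : X → ℝ≥0∞} {p r : ℝ}

theorem le_mul_setLAverage_rpow_of_forall_le {S : Set X} (hS : MeasurableSet S) (hS0 : μ S ≠ 0)
    (hS' : μ S ≠ ⊤) (hB : B ≠ ⊤) (hp : 0 < p) (hr : 0 < r) {a : ℝ≥0∞}
    (h : ∀ x ∈ S, a ≤ B * g x ^ r) :
    a ≤ B * (⨍⁻ x in S, g x ^ p ∂μ) ^ (r / p) := by
  have hq : 0 < p / r := div_pos hp hr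
  have hpow (x : X) : (B * g x ^ r) ^ (p / r) = B ^ (p / r) * g x ^ p := by
    rw [ENNReal.mul_rpow_of_nonneg _ _ hq.le, ← ENNReal.rpow_mul, mul_div_cancel₀ _ hr.ne']
  have hinv (y : ℝ≥0∞) : (y ^ (p / r)) ^ (r / p) = y := by
    rw [← ENNReal.rpow_mul, div_mul_div_cancel₀ hr.ne', div_self hp.ne', ENNReal.rpow_one]
  have havg : a ^ (p / r) ≤ B ^ (p / r) * ⨍⁻ x in S, g x ^ p ∂μ :=
    calc a ^ (p / r) = ⨍⁻ _x in S, a ^ (p / r) ∂μ := (setLAverage_const hS0 hS' _).symm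
      _ ≤ ⨍⁻ x in S, B ^ (p / r) * g x ^ p ∂μ :=
          laverage_mono_ae <| (ae_restrict_iff' hS).2 <| ae_of_all _ fun x hx =>
            (ENNReal.rpow_le_rpow (h x hx) hq.le).trans_eq (hpow x)
      _ = B ^ (p / r) * ⨍⁻ x in S, g x ^ p ∂μ := by
          rw [setLAverage_eq, setLAverage_eq, lintegral_const_mul' _ _
            (ENNReal.rpow_ne_top_of_nonneg hq.le hB), mul_div_assoc]
  calc a = (a ^ (p / r)) ^ (r / p) := (hinv a).symm
    _ ≤ (B ^ (p / r) * ⨍⁻ x in S, g x ^ p ∂μ) ^ (r / p) := by gcongr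
    _ = B * (⨍⁻ x in S, g x ^ p ∂μ) ^ (r / p) := by
        rw [ENNReal.mul_rpow_of_nonneg _ _ (div_pos hr hp).le, hinv]

theorem lintegral_le_of_forall_setLIntegral_le {ι : Type*} [Countable ι] {Q : ι → Set X}
    (hQm : ∀ k, MeasurableSet (Q k)) (hQd : Pairwise (Function.onFun Disjoint Q))
    (hQc : ⋃ k, Q k = univ) {V : ℝ≥0∞} (hV : ∀ k, μ (Q k) = V) (hV0 : V ≠ 0) (hV' : V ≠ ⊤)
    (hB : B ≠ ⊤) (hp : 0 < p) (hpr : p ≤ r) {F : X → ℝ≥0∞}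
    (h : ∀ k, ∀ x ∈ Q k, ∫⁻ y in Q k, F y ∂μ ≤ B * g x ^ r) :
    ∫⁻ y, F y ∂μ ≤ B * V ^ (-(r / p)) * (∫⁻ x, g x ^ p ∂μ) ^ (r / p) := by
  have hr : 0 < r := hp.trans_le hpr
  have hsplit (f : X → ℝ≥0∞) : ∫⁻ x, f x ∂μ = ∑' k, ∫⁻ x in Q k, f x ∂μ := by
    rw [← setLIntegral_univ, ← hQc, lintegral_iUnion hQm hQd]
  calc ∫⁻ y, F y ∂μ = ∑' k, ∫⁻ y in Q k, F y ∂μ := hsplit F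
    _ ≤ ∑' k, B * V ^ (-(r / p)) * (∫⁻ x in Q k, g x ^ p ∂μ) ^ (r / p) := by
        gcongr with k
        refine (le_mul_setLAverage_rpow_of_forall_le (hQm k) ((hV k).symm ▸ hV0)
          ((hV k).symm ▸ hV') hB hp hr (h k)).trans_eq ?_
        rw [setLAverage_eq, hV, ENNReal.div_rpow_of_nonneg _ _ (div_pos hr hp).le,
          ENNReal.rpow_neg, div_eq_mul_inv, mul_comm (_ ^ _), mul_assoc]
    _ = B * V ^ (-(r / p)) * ∑' k, (∫⁻ x in Q k, g x ^ p ∂μ) ^ (r / p) := ENNReal.tsum_mul_left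
    _ ≤ B * V ^ (-(r / p)) * (∫⁻ x, g x ^ p ∂μ) ^ (r / p) := by
        rw [hsplit]
        gcongr
        exact ENNReal.tsum_rpow_le_rpow_tsum _ ((one_le_div hp).2 hpr)

end Partition

theorem lintegral_le_of_forall_setLIntegral_ball_le {ι : Type*} [Fintype ι]
    {F g : EuclideanSpace ℝ ι → ℝ≥0∞} {ρ : ℝ} (hρ : 0 < ρ) {B : ℝ≥0∞} (hB : B ≠ ⊤) {p r : ℝ}
    (hp : 0 < p) (hpr : p ≤ r) (h : ∀ x, ∫⁻ y in Metric.ball x ρ, F y ≤ B * g x ^ r) :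
    ∫⁻ y, F y ≤ B * ENNReal.ofReal (ρ / (√(Fintype.card ι) + 1)) ^ (-(r * Fintype.card ι / p)) *
      (∫⁻ x, g x ^ p) ^ (r / p) := by
  set s := ρ / (√(Fintype.card ι) + 1)
  have hs : 0 < s := by positivity
  have hdiam : √(Fintype.card ι) * s < ρ := by
    rw [mul_div_assoc', div_lt_iff₀ (by positivity)]
    nlinarith
  have hcube (k : ι → ℤ) (x : EuclideanSpace ℝ ι) (hx : x ∈ gridCube s k) :
      gridCube s k ⊆ Metric.ball x ρ := fun y hy =>
    (dist_le_of_mem_gridCube hs.le hy hx).trans_lt hdiam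
  refine (lintegral_le_of_forall_setLIntegral_le (measurableSet_gridCube s)
    (pairwise_disjoint_gridCube hs) (iUnion_gridCube hs) (volume_gridCube s)
    (pow_ne_zero _ (ENNReal.ofReal_pos.2 hs).ne') (by finiteness) hB hp hpr
    fun k x hx => (lintegral_mono_set (hcube k x hx)).trans (h x)).trans_eq ?_
  rw [← ENNReal.rpow_natCast, ← ENNReal.rpow_mul]
  ring_nf

theorem lintegral_setLIntegral_Icc_le_of_local_bound {n : ℕ}
    {f : EuclideanSpace ℝ (Fin n) × ℝ → ℝ≥0∞} {g : EuclideanSpace ℝ (Fin n) → ℝ≥0∞} {p : ℝ}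
    (hp : 0 < p) (hp2 : p ≤ 2) {c : ℝ} (hc : 0 < c) (C₀ : ℝ)
    (hloc : ∀ x : EuclideanSpace ℝ (Fin n), ∀ τ : ℝ, 0 < τ →
      (∫⁻ y in {y : EuclideanSpace ℝ (Fin n) | dist y x < c * τ / 2},
          ∫⁻ t in Icc (c * τ) (2 * c * τ), f (y, t)) ≤
        ENNReal.ofReal C₀ * ENNReal.ofReal (τ ^ ((n : ℝ) - 1)) * g x ^ 2)
    {ρ : ℝ} (hρ : 0 < ρ) :
    ∫⁻ y, ∫⁻ t in Icc ρ (2 * ρ), f (y, t) ≤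
      ENNReal.ofReal C₀ * ENNReal.ofReal (c ^ (1 - (n : ℝ)) * (2 * (√n + 1)) ^ (2 * n / p)) *
        (∫⁻ x, g x ^ p) ^ (2 / p) * ENNReal.ofReal (ρ ^ ((n : ℝ) - 1 - 2 * n / p)) := by
  have hball (x : EuclideanSpace ℝ (Fin n)) :
      ∫⁻ y in Metric.ball x (ρ / 2), ∫⁻ t in Icc ρ (2 * ρ), f (y, t) ≤
        ENNReal.ofReal C₀ * ENNReal.ofReal ((ρ / c) ^ ((n : ℝ) - 1)) * g x ^ (2 : ℝ) := by
    have h := hloc x (ρ / c) (div_pos hρ hc)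
    rw [mul_assoc 2 c, mul_div_cancel₀ ρ hc.ne'] at h
    rwa [ENNReal.rpow_two]
  refine (lintegral_le_of_forall_setLIntegral_ball_le (half_pos hρ) (by finiteness) hp hp2
    hball).trans_eq ?_
  have hscale : (ρ / c) ^ ((n : ℝ) - 1) * (ρ / 2 / (√n + 1)) ^ (-(2 * n / p)) =
      c ^ (1 - (n : ℝ)) * (2 * (√n + 1)) ^ (2 * n / p) * ρ ^ ((n : ℝ) - 1 - 2 * n / p) := by
    have hb : (0 : ℝ) < 2 * (√n + 1) := by positivity
    rw [div_div, Real.div_rpow hρ.le hc.le, Real.div_rpow hρ.le hb.le,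
      show (1 : ℝ) - n = -(n - 1) by ring, Real.rpow_neg hc.le, Real.rpow_neg hb.le,
      show (n : ℝ) - 1 - 2 * n / p = (n - 1) + -(2 * n / p) by ring, Real.rpow_add hρ,
      div_inv_eq_mul]
    ring
  rw [Fintype.card_fin, ENNReal.ofReal_rpow_of_pos (by positivity), mul_assoc (ENNReal.ofReal C₀),
    ← ENNReal.ofReal_mul (by positivity), hscale, ENNReal.ofReal_mul (by positivity)]
  ring

theorem global_L2_from_area_general (n : ℕ) (p : ℝ) (hp1 : 1 < p) (hp2 : p ≤ 2)
    (u : EuclideanSpace ℝ (Fin n) × ℝ → ℂ) (hu : Measurable u)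
    (c : ℝ) (hc : 1 ≤ c) (C₀ : ℝ)
    (hloc : ∀ x : EuclideanSpace ℝ (Fin n), ∀ τ : ℝ, 0 < τ →
      (∫⁻ y in {y : EuclideanSpace ℝ (Fin n) | dist y x < c * τ / 2},
          ∫⁻ t in Set.Icc (c * τ) (2 * c * τ), ENNReal.ofReal (‖u (y, t)‖ ^ 2)) ≤
        ENNReal.ofReal C₀ * ENNReal.ofReal (τ ^ ((n : ℝ) - 1)) * (lusinTA2 n u x) ^ 2) :
    ∃ C : ℝ≥0∞, C ≠ ⊤ ∧ ∀ σ : ℝ, 0 < σ →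
      (∫⁻ y, ∫⁻ t in Set.Ioi σ, ENNReal.ofReal (‖u (y, t)‖ ^ 2)) ≤
        C * ENNReal.ofReal (σ ^ ((n : ℝ) - 1 - 2 * n / p)) *
          (∫⁻ x, lusinTA2 n u x ^ p) ^ (2 / p) := by
  have hp : 0 < p := zero_lt_one.trans hp1
  have he : (n : ℝ) - 1 - 2 * n / p ≤ -1 := by
    have : (n : ℝ) ≤ 2 * n / p := by rw [le_div_iff₀ hp]; nlinarith [n.cast_nonneg (α := ℝ)]
    linarith
  set K := ENNReal.ofReal C₀ * ENNReal.ofReal (c ^ (1 - (n : ℝ)) * (2 * (√n + 1)) ^ (2 * n / p))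
  refine ⟨2 * K, by finiteness, fun σ hσ => ?_⟩
  have hf : Measurable fun q : EuclideanSpace ℝ (Fin n) × ℝ => ENNReal.ofReal (‖u q‖ ^ 2) := by
    fun_prop
  calc _ ≤ 2 * (K * (∫⁻ x, lusinTA2 n u x ^ p) ^ (2 / p)) *
        ENNReal.ofReal (σ ^ ((n : ℝ) - 1 - 2 * n / p)) :=
        lintegral_setLIntegral_Ioi_le_of_dyadic hf he (fun ρ hρ =>
          lintegral_setLIntegral_Icc_le_of_local_bound (f := fun q => ENNReal.ofReal (‖u q‖ ^ 2))
            hp hp2 (zero_lt_one.trans_le hc) C₀ hloc hρ) hσ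
    _ = _ := by ring

theorem global_L2_from_area (n : ℕ) (p : ℝ) (hp1 : 1 < p) (hp2 : p ≤ 2)
    (u : EuclideanSpace ℝ (Fin n) × ℝ → ℂ) (hu : Measurable u)
    (hA : (∫⁻ x, lusinTA2 n u x ^ p) < ⊤)
    (c : ℝ) (hc : 1 ≤ c) (C₀ : ℝ) (hC₀ : 0 ≤ C₀)
    (hloc : ∀ x : EuclideanSpace ℝ (Fin n), ∀ τ : ℝ, 0 < τ →
      (∫⁻ y in {y : EuclideanSpace ℝ (Fin n) | dist y x < c * τ / 2},
          ∫⁻ t in Set.Icc (c * τ) (2 * c * τ), ENNReal.ofReal (‖u (y, t)‖ ^ 2)) ≤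
        ENNReal.ofReal C₀ * ENNReal.ofReal (τ ^ ((n : ℝ) - 1)) * (lusinTA2 n u x) ^ 2) :
    ∃ C : ℝ≥0∞, C ≠ ⊤ ∧ ∀ σ : ℝ, 0 < σ →
      (∫⁻ y, ∫⁻ t in Set.Ioi σ, ENNReal.ofReal (‖u (y, t)‖ ^ 2)) ≤
        C * ENNReal.ofReal (σ ^ ((n : ℝ) - 1 - 2 * n / p)) *
          (∫⁻ x, lusinTA2 n u x ^ p) ^ (2 / p) :=
  global_L2_from_area_general n p hp1 hp2 u hu c hc C₀ hloc
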